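/- arXiv:2104.14986 — 4 statements merged into one kernel-verified Lean document; each statement's English description precedes it below -/
import Mathlib

section
/- Let (d^{(1)}_m) and (d^{(2)}_m) be sequences of positive reals tending to infinity, and for each m let G_m be a bipartite multigraph with nonempty parts V_1(G_m), V_2(G_m) such that max_{v∈V_1(G_m)} |deg(v)/d^{(1)}_m − 1| → 0 and max_{w∈V_2(G_m)} |deg(w)/d^{(2)}_m − 1| → 0 as m → ∞ (so in particular all degrees are positive for all large m). Then max_{1 ≤ i ≤ |V(G_m)|} | μ_i(A(G_m))/√(d^{(1)}_m d^{(2)}_m) − μ_i(D(G_m)^{−1/2} A(G_m) D(G_m)^{−1/2}) | → 0 as m → ∞. In particular, if additionally μ_2(A(G_m))/√(d^{(1)}_m d^{(2)}_m) → 0, then λ_1(G_m) → 1. -/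
/-!
Let `f v = deg(v)^{-1/2}` and let `g v` be `d₁^{-1/2}` on `V₁` and `d₂^{-1/2}` on `V₂`. Since every
edge joins `V₁` to `V₂`, `A / √(d₁ d₂) = diag g · A · diag g`, while `D^{-1/2} A D^{-1/2} =
diag f · A · diag f`. If every `|deg v / d_v - 1| ≤ δ`, then `|g v g w - f v f w| ≤ δ f v f w`, and
`2 |a b| ≤ a² + b²` together with `∑_w A v w f v² = 1` bounds the quadratic form of the difference
of the two matrices by `δ ‖x‖²`. By Weyl's inequality every eigenvalue moves by at most `δ`.
Finally `λ₁ = 1 - μ₂(D^{-1/2} A D^{-1/2})`, so `μ₂(A) / √(d₁ d₂) → 0` forces `λ₁ → 1`.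
-/

open Matrix Filter

/-- Ascending list of eigenvalues (with multiplicity) of a real matrix;
junk value `[]` if the matrix is not symmetric. -/
noncomputable def eigs {V : Type*} [Fintype V] [DecidableEq V] (A : Matrix V V ℝ) : List ℝ :=
  if hA : A.IsHermitian then (Finset.univ.val.map hA.eigenvalues).sort (· ≤ ·) else []

/-- `i`-th smallest eigenvalue (0-indexed): `λ_i`. -/
noncomputable def eigAsc {V : Type*} [Fintype V] [DecidableEq V] (A : Matrix V V ℝ) (i : ℕ) : ℝ :=
  (eigs A).getD i 0

/-- `i`-th largest eigenvalue (1-indexed): `μ_i`. -/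
noncomputable def eigDesc {V : Type*} [Fintype V] [DecidableEq V] (A : Matrix V V ℝ) (i : ℕ) : ℝ :=
  (eigs A).reverse.getD (i - 1) 0

/-- Degree of vertex `v` in the multigraph with adjacency matrix `A`. -/
def deg {V : Type*} [Fintype V] (A : Matrix V V ℕ) (v : V) : ℕ := ∑ u, A v u

/-- `D⁻¹ᐟ² A D⁻¹ᐟ²`, normalized adjacency matrix of a multigraph. -/
noncomputable def normAdj {V : Type*} [Fintype V] [DecidableEq V] (A : Matrix V V ℕ) :
    Matrix V V ℝ :=
  Matrix.diagonal (fun v => ((deg A v : ℝ)) ^ (-(1/2) : ℝ)) * A.map (Nat.cast : ℕ → ℝ) *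
    Matrix.diagonal (fun v => ((deg A v : ℝ)) ^ (-(1/2) : ℝ))

/-- Normalized Laplacian `I - D⁻¹ᐟ² A D⁻¹ᐟ²` of a multigraph. -/
noncomputable def normLap {V : Type*} [Fintype V] [DecidableEq V] (A : Matrix V V ℕ) :
    Matrix V V ℝ :=
  1 - normAdj A

/-- `λ₁`: second-smallest eigenvalue of the normalized Laplacian. -/
noncomputable def lam1 {V : Type*} [Fintype V] [DecidableEq V] (A : Matrix V V ℕ) : ℝ :=
  eigAsc (normLap A) 1

/-- Adjacency matrix of the bipartite multigraph with biadjacency matrix `B`. -/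
def bipAdj {V₁ V₂ : Type*} (B : Matrix V₁ V₂ ℕ) : Matrix (V₁ ⊕ V₂) (V₁ ⊕ V₂) ℕ :=
  Matrix.fromBlocks 0 B Bᵀ 0

open Module Submodule
open scoped RealInnerProductSpace InnerProductSpace

namespace OrthonormalBasis

section RCLike

variable {𝕜 E ι : Type*} [RCLike 𝕜] [NormedAddCommGroup E] [InnerProductSpace 𝕜 E] [Fintype ι]

theorem finrank_span_range_restrict (b : OrthonormalBasis ι 𝕜 E) (s : Finset ι) :
    finrank 𝕜 (span 𝕜 (Set.range fun j : s => b j)) = s.card :=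
  (finrank_span_eq_card (b.orthonormal.linearIndependent.comp _ Subtype.val_injective)).trans
    (Fintype.card_coe s)

theorem inner_eq_zero_of_mem_span_restrict (b : OrthonormalBasis ι 𝕜 E) {s : Finset ι} {i : ι}
    (hi : i ∉ s) {x : E} (hx : x ∈ span 𝕜 (Set.range fun j : s => b j)) : ⟪b i, x⟫_𝕜 = 0 := by
  have hle : span 𝕜 (Set.range fun j : s => b j) ≤ (𝕜 ∙ b i)ᗮ := by
    refine span_le.2 ?_
    rintro _ ⟨j, rfl⟩
    exact mem_orthogonal_singleton_iff_inner_right.2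
      (b.orthonormal.2 fun h => hi (h ▸ j.2))
  exact mem_orthogonal_singleton_iff_inner_right.1 (hle hx)

end RCLike

variable {E ι : Type*} [NormedAddCommGroup E] [InnerProductSpace ℝ E] [Fintype ι]
  (b : OrthonormalBasis ι ℝ E) {T : E →ₗ[ℝ] E} {μ : ι → ℝ}

theorem inner_map_self_eq_sum (hb : ∀ i, T (b i) = μ i • b i) (x : E) :
    ⟪T x, x⟫ = ∑ i, μ i * ⟪b i, x⟫ ^ 2 := by
  have hTx : T x = ∑ j, (⟪b j, x⟫ * μ j) • b j := by
    conv_lhs => rw [← b.sum_repr' x]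
    simp only [map_sum, map_smul, hb, smul_smul]
  rw [← b.sum_inner_mul_inner]
  refine Finset.sum_congr rfl fun i _ => ?_
  rw [real_inner_comm, hTx, b.orthonormal.inner_right_fintype]
  ring

theorem mul_norm_sq_le_inner_map_self (hb : ∀ i, T (b i) = μ i • b i) {s : Finset ι} {c : ℝ}
    (hc : ∀ i ∈ s, c ≤ μ i) {x : E} (hx : x ∈ span ℝ (Set.range fun j : s => b j)) :
    c * ‖x‖ ^ 2 ≤ ⟪T x, x⟫ := by
  rw [b.inner_map_self_eq_sum hb, ← b.sum_sq_inner_right, Finset.mul_sum]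
  refine Finset.sum_le_sum fun i _ => ?_
  by_cases hi : i ∈ s
  · exact mul_le_mul_of_nonneg_right (hc i hi) (sq_nonneg _)
  · simp [b.inner_eq_zero_of_mem_span_restrict hi hx]

theorem inner_map_self_le_mul_norm_sq (hb : ∀ i, T (b i) = μ i • b i) {s : Finset ι} {c : ℝ}
    (hc : ∀ i ∈ s, μ i ≤ c) {x : E} (hx : x ∈ span ℝ (Set.range fun j : s => b j)) :
    ⟪T x, x⟫ ≤ c * ‖x‖ ^ 2 := by
  rw [b.inner_map_self_eq_sum hb, ← b.sum_sq_inner_right, Finset.mul_sum]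
  refine Finset.sum_le_sum fun i _ => ?_
  by_cases hi : i ∈ s
  · exact mul_le_mul_of_nonneg_right (hc i hi) (sq_nonneg _)
  · simp [b.inner_eq_zero_of_mem_span_restrict hi hx]

end OrthonormalBasis

/-- Weyl's inequality via Courant–Fischer: the span of the first `k + 1` eigenvectors of `T` meets
the span of the last `n - k` eigenvectors of `S`. -/
theorem le_add_of_inner_map_self_le {E : Type*} [NormedAddCommGroup E] [InnerProductSpace ℝ E]
    {n : ℕ} {T S : E →ₗ[ℝ] E} (b c : OrthonormalBasis (Fin n) ℝ E)
    {μ ν : Fin n → ℝ} (hμ : Antitone μ) (hν : Antitone ν)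
    (hb : ∀ i, T (b i) = μ i • b i) (hc : ∀ i, S (c i) = ν i • c i) {ε : ℝ}
    (h : ∀ x, ⟪T x, x⟫ ≤ ⟪S x, x⟫ + ε * ‖x‖ ^ 2) (k : Fin n) :
    μ k ≤ ν k + ε := by
  have := b.toBasis.finiteDimensional_of_finite
  set U := span ℝ (Set.range fun j : (Finset.Iic k) => b j)
  set W := span ℝ (Set.range fun j : (Finset.Ici k) => c j)
  have hdim : finrank ℝ E < finrank ℝ U + finrank ℝ W := by
    rw [b.finrank_span_range_restrict, c.finrank_span_range_restrict, Fin.card_Iic,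
      Fin.card_Ici, finrank_eq_card_basis b.toBasis, Fintype.card_fin]
    omega
  obtain ⟨x, ⟨hxU, hxW⟩, hx⟩ : ∃ x ∈ U ⊓ W, x ≠ 0 := by
    by_contra! hUW
    exact hdim.not_ge (finrank_add_finrank_le_of_disjoint
      (disjoint_def.2 fun x hxU hxW => by_contra fun hx => hx (hUW x ⟨hxU, hxW⟩)))
  have hlow := b.mul_norm_sq_le_inner_map_self hb
    (fun i hi => hμ (Finset.mem_Iic.1 hi)) hxU
  have hup := c.inner_map_self_le_mul_norm_sq hc
    (fun i hi => hν (Finset.mem_Ici.1 hi)) hxW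
  have hxpos : 0 < ‖x‖ ^ 2 := by positivity
  nlinarith [h x]

theorem EuclideanSpace.norm_sq_eq_dotProduct {m : Type*} [Fintype m] (x : EuclideanSpace ℝ m) :
    ‖x‖ ^ 2 = WithLp.ofLp x ⬝ᵥ WithLp.ofLp x := by
  rw [← real_inner_self_eq_norm_sq, EuclideanSpace.inner_eq_star_dotProduct, star_trivial]

namespace Matrix

open WithLp

variable {m : Type*} [Fintype m] [DecidableEq m] {A B : Matrix m m ℝ}

theorem inner_toEuclideanLin_self (A : Matrix m m ℝ) (x : EuclideanSpace ℝ m) :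
    ⟪toEuclideanLin A x, x⟫ = ofLp x ⬝ᵥ (A *ᵥ ofLp x) := by
  simp [EuclideanSpace.inner_eq_star_dotProduct]

theorem le_add_of_dotProduct_mulVec_le {n : ℕ}
    (b c : OrthonormalBasis (Fin n) ℝ (EuclideanSpace ℝ m)) {μ ν : Fin n → ℝ}
    (hμ : Antitone μ) (hν : Antitone ν) (hb : ∀ i, A *ᵥ ofLp (b i) = μ i • ofLp (b i))
    (hc : ∀ i, B *ᵥ ofLp (c i) = ν i • ofLp (c i)) {ε : ℝ}
    (h : ∀ x : m → ℝ, x ⬝ᵥ (A *ᵥ x) ≤ x ⬝ᵥ (B *ᵥ x) + ε * (x ⬝ᵥ x)) (k : Fin n) :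
    μ k ≤ ν k + ε :=
  le_add_of_inner_map_self_le (T := toEuclideanLin A) (S := toEuclideanLin B) b c hμ hν
    (fun i => congrArg (toLp 2) (hb i)) (fun i => congrArg (toLp 2) (hc i))
    (fun x => by
      simpa only [inner_toEuclideanLin_self, EuclideanSpace.norm_sq_eq_dotProduct] using h (ofLp x))
    k

namespace IsHermitian

theorem exists_orthonormalBasis_mulVec_eq (hA : A.IsHermitian) :
    ∃ b : OrthonormalBasis (Fin (Fintype.card m)) ℝ (EuclideanSpace ℝ m),
      ∀ i, A *ᵥ ofLp (b i) = hA.eigenvalues₀ i • ofLp (b i) :=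
  ⟨_, fun i => congrArg ofLp
    ((isSymmetric_toEuclideanLin_iff.mpr hA).apply_eigenvectorBasis finrank_euclideanSpace i)⟩

theorem eigenvalues₀_le_add (hA : A.IsHermitian) (hB : B.IsHermitian) {ε : ℝ}
    (h : ∀ x : m → ℝ, x ⬝ᵥ (A *ᵥ x) ≤ x ⬝ᵥ (B *ᵥ x) + ε * (x ⬝ᵥ x))
    (k : Fin (Fintype.card m)) : hA.eigenvalues₀ k ≤ hB.eigenvalues₀ k + ε := by
  obtain ⟨b, hb⟩ := hA.exists_orthonormalBasis_mulVec_eq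
  obtain ⟨c, hc⟩ := hB.exists_orthonormalBasis_mulVec_eq
  exact le_add_of_dotProduct_mulVec_le b c hA.eigenvalues₀_antitone hB.eigenvalues₀_antitone
    hb hc h k

theorem abs_eigenvalues₀_sub_le (hA : A.IsHermitian) (hB : B.IsHermitian) {ε : ℝ}
    (h : ∀ x : m → ℝ, |x ⬝ᵥ ((A - B) *ᵥ x)| ≤ ε * (x ⬝ᵥ x)) (k : Fin (Fintype.card m)) :
    |hA.eigenvalues₀ k - hB.eigenvalues₀ k| ≤ ε := by
  have hsub : ∀ x : m → ℝ, x ⬝ᵥ ((A - B) *ᵥ x) = x ⬝ᵥ (A *ᵥ x) - x ⬝ᵥ (B *ᵥ x) := fun x => by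
    rw [sub_mulVec, dotProduct_sub]
  have hAB := hA.eigenvalues₀_le_add hB (fun x => by linarith [(abs_le.1 (h x)).2, hsub x]) k
  have hBA := hB.eigenvalues₀_le_add hA (fun x => by linarith [(abs_le.1 (h x)).1, hsub x]) k
  exact abs_le.2 ⟨by linarith, by linarith⟩

theorem eigenvalues₀_eq_of_orthonormalBasis (hA : A.IsHermitian)
    (b : OrthonormalBasis (Fin (Fintype.card m)) ℝ (EuclideanSpace ℝ m))
    {μ : Fin (Fintype.card m) → ℝ} (hμ : Antitone μ)
    (hb : ∀ i, A *ᵥ ofLp (b i) = μ i • ofLp (b i)) : hA.eigenvalues₀ = μ := by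
  obtain ⟨c, hc⟩ := hA.exists_orthonormalBasis_mulVec_eq
  have hle : ∀ x : m → ℝ, x ⬝ᵥ (A *ᵥ x) ≤ x ⬝ᵥ (A *ᵥ x) + 0 * (x ⬝ᵥ x) := fun x => by simp
  funext k
  have h₁ := le_add_of_dotProduct_mulVec_le c b hA.eigenvalues₀_antitone hμ hc hb hle k
  have h₂ := le_add_of_dotProduct_mulVec_le b c hμ hA.eigenvalues₀_antitone hb hc hle k
  linarith

theorem eigenvalues₀_smul (hA : A.IsHermitian) {c : ℝ} (hc : 0 ≤ c) :
    (hA.smul (IsSelfAdjoint.all c)).eigenvalues₀ = c • hA.eigenvalues₀ := by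
  obtain ⟨b, hb⟩ := hA.exists_orthonormalBasis_mulVec_eq
  refine eigenvalues₀_eq_of_orthonormalBasis _ b (hA.eigenvalues₀_antitone.const_mul hc) fun i => ?_
  rw [smul_mulVec, hb, smul_smul, Pi.smul_apply, smul_eq_mul]

theorem eigenvalues₀_one_sub (hA : A.IsHermitian) (k : Fin (Fintype.card m)) :
    (isHermitian_one.sub hA).eigenvalues₀ k = 1 - hA.eigenvalues₀ k.rev := by
  obtain ⟨b, hb⟩ := hA.exists_orthonormalBasis_mulVec_eq
  have hμ : Antitone fun k : Fin (Fintype.card m) => 1 - hA.eigenvalues₀ k.rev :=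
    fun i j hij => sub_le_sub_left (hA.eigenvalues₀_antitone (Fin.rev_le_rev.2 hij)) 1
  refine congrFun (eigenvalues₀_eq_of_orthonormalBasis _ (b.reindex Fin.revPerm) hμ fun i => ?_) k
  rw [OrthonormalBasis.reindex_apply, Fin.revPerm_symm, Fin.revPerm_apply, sub_mulVec, one_mulVec,
    hb, sub_smul, one_smul]

end IsHermitian

end Matrix

section Eigs

variable {m : Type*} [Fintype m] [DecidableEq m] {A : Matrix m m ℝ}

theorem eigs_eq_reverse_ofFn_eigenvalues₀ (hA : A.IsHermitian) :
    eigs A = (List.ofFn hA.eigenvalues₀).reverse := by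
  rw [eigs, dif_pos hA]
  refine List.Perm.eq_of_pairwise' (Multiset.pairwise_sort _ _)
    (List.sortedLE_reverse.2 hA.eigenvalues₀_antitone.sortedGE_ofFn).pairwise ?_
  rw [← Multiset.coe_eq_coe, Multiset.sort_eq, Multiset.coe_reverse, ← Fin.univ_val_map,
    ← Multiset.map_univ_val_equiv (Fintype.equivOfCardEq (Fintype.card_fin _)).symm,
    Multiset.map_map]
  rfl

theorem eigDesc_succ (hA : A.IsHermitian) (k : Fin (Fintype.card m)) :
    eigDesc A (k + 1) = hA.eigenvalues₀ k := by
  simp [eigDesc, eigs_eq_reverse_ofFn_eigenvalues₀ hA]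

theorem eigAsc_eq_eigenvalues₀_rev (hA : A.IsHermitian) (k : Fin (Fintype.card m)) :
    eigAsc A k = hA.eigenvalues₀ k.rev := by
  simp [eigAsc, eigs_eq_reverse_ofFn_eigenvalues₀ hA, Fin.rev, Nat.sub_sub, add_comm]

end Eigs

section QuadraticForm

variable {V : Type*} [Fintype V]

theorem dotProduct_mulVec_self_eq_sum (M : Matrix V V ℝ) (x : V → ℝ) :
    x ⬝ᵥ (M *ᵥ x) = ∑ v, ∑ w, M v w * (x v * x w) := by
  simp only [dotProduct, mulVec, Finset.mul_sum]
  exact Finset.sum_congr rfl fun v _ => Finset.sum_congr rfl fun w _ => by ring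

theorem sum_sum_mul_mul_le_sum_mul_sq {A : Matrix V V ℝ} (hA : A.IsSymm)
    (hA₀ : ∀ v w, 0 ≤ A v w) (y : V → ℝ) :
    ∑ v, ∑ w, A v w * (y v * y w) ≤ ∑ v, (∑ w, A v w) * y v ^ 2 := by
  have hswap : ∑ v, ∑ w, A v w * y w ^ 2 = ∑ v, (∑ w, A v w) * y v ^ 2 := by
    rw [Finset.sum_comm]
    simp only [hA.apply, Finset.sum_mul]
  calc ∑ v, ∑ w, A v w * (y v * y w)
      ≤ ∑ v, ∑ w, (A v w * y v ^ 2 + A v w * y w ^ 2) / 2 :=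
        Finset.sum_le_sum fun v _ => Finset.sum_le_sum fun w _ => by
          nlinarith [mul_nonneg (hA₀ v w) (sq_nonneg (y v - y w))]
    _ = ∑ v, (∑ w, A v w) * y v ^ 2 := by
        simp only [← Finset.sum_div, Finset.sum_add_distrib, hswap, Finset.sum_mul]
        ring

theorem abs_dotProduct_diagonal_mul_mul_sub_le [DecidableEq V] {A : Matrix V V ℝ} (hA : A.IsSymm)
    (hA₀ : ∀ v w, 0 ≤ A v w) {f g : V → ℝ} {δ : ℝ} (hδ : 0 ≤ δ)
    (hfA : ∀ v, (∑ w, A v w) * f v ^ 2 = 1)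
    (hfg : ∀ v w, |g v * g w - f v * f w| ≤ δ * (f v * f w)) (x : V → ℝ) :
    |x ⬝ᵥ ((diagonal g * A * diagonal g - diagonal f * A * diagonal f) *ᵥ x)| ≤
      δ * (x ⬝ᵥ x) := by
  set y : V → ℝ := fun v => f v * |x v|
  have hterm : ∀ v w, |A v w * (g v * g w - f v * f w) * (x v * x w)| ≤
      δ * (A v w * (y v * y w)) := fun v w => by
    rw [abs_mul, abs_mul, abs_mul, abs_of_nonneg (hA₀ v w)]
    calc A v w * |g v * g w - f v * f w| * (|x v| * |x w|)
        ≤ A v w * (δ * (f v * f w)) * (|x v| * |x w|) := by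
          gcongr
          exacts [hA₀ v w, hfg v w]
      _ = δ * (A v w * (y v * y w)) := by ring
  have hy : ∀ v, (∑ w, A v w) * y v ^ 2 = x v * x v := fun v => by
    rw [mul_pow, sq_abs, ← mul_assoc, hfA, one_mul, sq]
  rw [dotProduct_mulVec_self_eq_sum]
  calc |∑ v, ∑ w, (diagonal g * A * diagonal g - diagonal f * A * diagonal f) v w * (x v * x w)|
      = |∑ v, ∑ w, A v w * (g v * g w - f v * f w) * (x v * x w)| := by
        congr 1
        refine Finset.sum_congr rfl fun v _ => Finset.sum_congr rfl fun w _ => ?_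
        simp only [Matrix.sub_apply, mul_diagonal, diagonal_mul]
        ring
    _ ≤ ∑ v, ∑ w, |A v w * (g v * g w - f v * f w) * (x v * x w)| :=
        (Finset.abs_sum_le_sum_abs _ _).trans
          (Finset.sum_le_sum fun v _ => Finset.abs_sum_le_sum_abs _ _)
    _ ≤ δ * ∑ v, ∑ w, A v w * (y v * y w) := by
        simp only [Finset.mul_sum]
        exact Finset.sum_le_sum fun v _ => Finset.sum_le_sum fun w _ => hterm v w
    _ ≤ δ * ∑ v, (∑ w, A v w) * y v ^ 2 :=
        mul_le_mul_of_nonneg_left (sum_sum_mul_mul_le_sum_mul_sq hA hA₀ y) hδ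
    _ = δ * (x ⬝ᵥ x) := by simp only [hy, dotProduct]

end QuadraticForm

theorem abs_sqrt_mul_sub_one_le {r s δ : ℝ} (hr : |r - 1| ≤ δ) (hs : |s - 1| ≤ δ) (hδ : δ ≤ 1) :
    |√(r * s) - 1| ≤ δ := by
  obtain ⟨hr₁, hr₂⟩ := abs_le.1 hr
  obtain ⟨hs₁, hs₂⟩ := abs_le.1 hs
  have hlow : (1 - δ) ^ 2 ≤ r * s := by nlinarith
  have hup : r * s ≤ (1 + δ) ^ 2 := by nlinarith
  have h₁ := Real.sqrt_le_sqrt hlow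
  have h₂ := Real.sqrt_le_sqrt hup
  rw [Real.sqrt_sq (by linarith)] at h₁ h₂
  exact abs_le.2 ⟨by linarith, by linarith⟩

theorem abs_inv_sqrt_mul_sub_le {p q P Q δ : ℝ} (hp : 0 < p) (hq : 0 < q) (hP : 0 < P)
    (hQ : 0 < Q) (hpP : |p / P - 1| ≤ δ) (hqQ : |q / Q - 1| ≤ δ) (hδ : δ ≤ 1) :
    |(√P)⁻¹ * (√Q)⁻¹ - (√p)⁻¹ * (√q)⁻¹| ≤ δ * ((√p)⁻¹ * (√q)⁻¹) := by
  have hratio : (√P)⁻¹ * (√Q)⁻¹ = (√p)⁻¹ * (√q)⁻¹ * √(p / P * (q / Q)) := by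
    rw [Real.sqrt_mul (div_nonneg hp.le hP.le), Real.sqrt_div hp.le, Real.sqrt_div hq.le]
    field_simp
  rw [hratio, ← mul_sub_one, abs_mul, abs_of_pos (by positivity), mul_comm]
  exact mul_le_mul_of_nonneg_right (abs_sqrt_mul_sub_one_le hpP hqQ hδ) (by positivity)

section Multigraph

theorem sum_map_natCast_eq_deg {V : Type*} [Fintype V] (A : Matrix V V ℕ) (v : V) :
    ∑ w, A.map (Nat.cast : ℕ → ℝ) v w = deg A v := by
  simp [deg]

variable {V : Type*} [Fintype V] [DecidableEq V]

theorem normAdj_eq (A : Matrix V V ℕ) :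
    normAdj A = diagonal (fun v => (√(deg A v : ℝ))⁻¹) * A.map (Nat.cast : ℕ → ℝ) *
      diagonal (fun v => (√(deg A v : ℝ))⁻¹) := by
  simp only [normAdj, Real.rpow_neg (Nat.cast_nonneg _), ← Real.sqrt_eq_rpow]

theorem normAdj_isSymm {A : Matrix V V ℕ} (hA : A.IsSymm) : (normAdj A).IsSymm := by
  rw [IsSymm, normAdj, transpose_mul, transpose_mul, diagonal_transpose, (hA.map _).eq, mul_assoc]

theorem abs_dotProduct_sub_normAdj_le {A : Matrix V V ℕ} (hA : A.IsSymm) {d : V → ℝ}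
    (hd : ∀ v, 0 < d v) {δ : ℝ} (hδ₀ : 0 ≤ δ) (hδ : δ < 1)
    (hdeg : ∀ v, |(deg A v : ℝ) / d v - 1| ≤ δ) (x : V → ℝ) :
    |x ⬝ᵥ ((diagonal (fun v => (√(d v))⁻¹) * A.map (Nat.cast : ℕ → ℝ) *
        diagonal (fun v => (√(d v))⁻¹) - normAdj A) *ᵥ x)| ≤ δ * (x ⬝ᵥ x) := by
  have hdeg_pos : ∀ v, (0 : ℝ) < deg A v := fun v => by
    have h := (abs_le.1 (hdeg v)).1
    have : 0 < (deg A v : ℝ) / d v := by linarith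
    exact (div_pos_iff_of_pos_right (hd v)).1 this
  rw [normAdj_eq]
  refine abs_dotProduct_diagonal_mul_mul_sub_le (hA.map _) (fun v w => Nat.cast_nonneg _) hδ₀
    (fun v => ?_) (fun v w => ?_) x
  · rw [sum_map_natCast_eq_deg, inv_pow, Real.sq_sqrt (hdeg_pos v).le,
      mul_inv_cancel₀ (hdeg_pos v).ne']
  · exact abs_inv_sqrt_mul_sub_le (hdeg_pos v) (hdeg_pos w) (hd v) (hd w) (hdeg v) (hdeg w) hδ.le

theorem lam1_eq_one_sub_eigDesc_two {A : Matrix V V ℕ} (hA : A.IsSymm) (hV : 2 ≤ Fintype.card V) :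
    lam1 A = 1 - eigDesc (normAdj A) 2 := by
  have hN : (normAdj A).IsHermitian := isHermitian_iff_isSymm.2 (normAdj_isSymm hA)
  let k : Fin (Fintype.card V) := ⟨1, hV⟩
  have h := eigAsc_eq_eigenvalues₀_rev (isHermitian_one.sub hN) k
  rw [hN.eigenvalues₀_one_sub, Fin.rev_rev] at h
  rw [lam1, normLap, h, ← eigDesc_succ hN]

end Multigraph

section Bipartite

theorem bipAdj_isSymm {V₁ V₂ : Type*} (B : Matrix V₁ V₂ ℕ) : (bipAdj B).IsSymm :=
  IsSymm.fromBlocks isSymm_zero rfl isSymm_zero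

variable {V₁ V₂ : Type*} [Fintype V₁] [Fintype V₂] [DecidableEq V₁] [DecidableEq V₂]

theorem inv_sqrt_mul_smul_bipAdj {d₁ d₂ : ℝ} (hd₁ : 0 ≤ d₁) (B : Matrix V₁ V₂ ℕ) :
    (√(d₁ * d₂))⁻¹ • (bipAdj B).map (Nat.cast : ℕ → ℝ) =
      diagonal (fun v => (√(Sum.elim (fun _ => d₁) (fun _ => d₂) v))⁻¹) *
        (bipAdj B).map (Nat.cast : ℕ → ℝ) *
        diagonal (fun v => (√(Sum.elim (fun _ => d₁) (fun _ => d₂) v))⁻¹) := by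
  ext (v | v) (w | w) <;> simp [bipAdj, Real.sqrt_mul hd₁] <;> ring

theorem abs_eigDesc_bipAdj_div_sub_eigDesc_normAdj_le (B : Matrix V₁ V₂ ℕ) {d₁ d₂ δ : ℝ}
    (hd₁ : 0 < d₁) (hd₂ : 0 < d₂) (hδ₀ : 0 ≤ δ) (hδ : δ < 1)
    (h₁ : ∀ v, |(deg (bipAdj B) (Sum.inl v) : ℝ) / d₁ - 1| ≤ δ)
    (h₂ : ∀ w, |(deg (bipAdj B) (Sum.inr w) : ℝ) / d₂ - 1| ≤ δ)
    {i : ℕ} (hi₁ : 1 ≤ i) (hi₂ : i ≤ Fintype.card V₁ + Fintype.card V₂) :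
    |eigDesc ((bipAdj B).map (Nat.cast : ℕ → ℝ)) i / √(d₁ * d₂) -
        eigDesc (normAdj (bipAdj B)) i| ≤ δ := by
  have hA : ((bipAdj B).map (Nat.cast : ℕ → ℝ)).IsHermitian :=
    isHermitian_iff_isSymm.2 ((bipAdj_isSymm B).map _)
  have hN : (normAdj (bipAdj B)).IsHermitian :=
    isHermitian_iff_isSymm.2 (normAdj_isSymm (bipAdj_isSymm B))
  obtain ⟨k, rfl⟩ : ∃ k : Fin (Fintype.card (V₁ ⊕ V₂)), i = k + 1 :=
    ⟨⟨i - 1, by rw [Fintype.card_sum]; omega⟩, by simp only; omega⟩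
  have hc : 0 ≤ (√(d₁ * d₂))⁻¹ := inv_nonneg.2 (Real.sqrt_nonneg _)
  rw [eigDesc_succ hA, eigDesc_succ hN, div_eq_inv_mul, ← smul_eq_mul, ← Pi.smul_apply,
    ← hA.eigenvalues₀_smul hc]
  refine IsHermitian.abs_eigenvalues₀_sub_le _ hN (fun x => ?_) k
  rw [inv_sqrt_mul_smul_bipAdj hd₁.le]
  exact abs_dotProduct_sub_normAdj_le (bipAdj_isSymm B)
    (Sum.forall.2 ⟨fun _ => hd₁, fun _ => hd₂⟩) hδ₀ hδ (Sum.forall.2 ⟨h₁, h₂⟩) x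

end Bipartite

theorem almost_regular_bipartite_spectral_general {n₁ n₂ : ℕ → ℕ}
    (hn₁ : ∀ m, 0 < n₁ m) (hn₂ : ∀ m, 0 < n₂ m)
    (d₁ d₂ : ℕ → ℝ) (hd₁pos : ∀ m, 0 < d₁ m) (hd₂pos : ∀ m, 0 < d₂ m)
    (B : ∀ m, Matrix (Fin (n₁ m)) (Fin (n₂ m)) ℕ)
    (hreg₁ : ∀ ε > (0 : ℝ), ∀ᶠ m in atTop,
      ∀ v, |(deg (bipAdj (B m)) (Sum.inl v) : ℝ) / d₁ m - 1| < ε)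
    (hreg₂ : ∀ ε > (0 : ℝ), ∀ᶠ m in atTop,
      ∀ w, |(deg (bipAdj (B m)) (Sum.inr w) : ℝ) / d₂ m - 1| < ε) :
    (∀ ε > (0 : ℝ), ∀ᶠ m in atTop, ∀ i : ℕ, 1 ≤ i → i ≤ n₁ m + n₂ m →
      |eigDesc ((bipAdj (B m)).map (Nat.cast : ℕ → ℝ)) i / Real.sqrt (d₁ m * d₂ m) -
          eigDesc (normAdj (bipAdj (B m))) i| < ε) ∧
    (Tendsto (fun m =>
        eigDesc ((bipAdj (B m)).map (Nat.cast : ℕ → ℝ)) 2 / Real.sqrt (d₁ m * d₂ m))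
        atTop (nhds 0) →
      Tendsto (fun m => lam1 (bipAdj (B m))) atTop (nhds 1)) := by
  have hcard : ∀ m, 2 ≤ n₁ m + n₂ m := fun m => Nat.add_le_add (hn₁ m) (hn₂ m)
  have part₁ : ∀ ε > (0 : ℝ), ∀ᶠ m in atTop, ∀ i : ℕ, 1 ≤ i → i ≤ n₁ m + n₂ m →
      |eigDesc ((bipAdj (B m)).map (Nat.cast : ℕ → ℝ)) i / Real.sqrt (d₁ m * d₂ m) -
          eigDesc (normAdj (bipAdj (B m))) i| < ε := fun ε hε => by
    have hδ : 0 < min (ε / 2) (1 / 2) := lt_min (half_pos hε) one_half_pos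
    filter_upwards [hreg₁ _ hδ, hreg₂ _ hδ] with m h₁ h₂ i hi₁ hi₂
    refine (abs_eigDesc_bipAdj_div_sub_eigDesc_normAdj_le (B m) (hd₁pos m) (hd₂pos m) hδ.le
      ((min_le_right _ _).trans_lt one_half_lt_one) (fun v => (h₁ v).le) (fun w => (h₂ w).le) hi₁
      (by simpa using hi₂)).trans_lt ((min_le_left _ _).trans_lt (half_lt_self hε))
  refine ⟨part₁, fun hμ₂ => ?_⟩
  set ν₂ := fun m => eigDesc (normAdj (bipAdj (B m))) 2
  have hgap : Tendsto (fun m => eigDesc ((bipAdj (B m)).map (Nat.cast : ℕ → ℝ)) 2 /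
      Real.sqrt (d₁ m * d₂ m) - ν₂ m) atTop (nhds 0) :=
    Metric.tendsto_nhds.2 fun ε hε => (part₁ ε hε).mono fun m hm => by
      simpa [Real.dist_eq] using hm 2 one_le_two (hcard m)
  have hν₂ : Tendsto ν₂ atTop (nhds 0) := by simpa using hμ₂.sub hgap
  have hlam : (fun m => lam1 (bipAdj (B m))) = fun m => 1 - ν₂ m := funext fun m =>
    lam1_eq_one_sub_eigDesc_two (bipAdj_isSymm (B m)) (by simpa using hcard m)
  simpa [hlam] using (tendsto_const_nhds (x := (1 : ℝ))).sub hν₂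

/-- For an almost `(d¹_m, d²_m)`-regular family of bipartite multigraphs
(with `d¹_m, d²_m → ∞`), the eigenvalues of `A/√(d¹ d²)` and of `D⁻¹ᐟ² A D⁻¹ᐟ²` agree up to
`o_m(1)` uniformly; in particular if `μ₂(A_m)/√(d¹_m d²_m) → 0` then `λ₁(G_m) → 1`. -/
theorem almost_regular_bipartite_spectral {n₁ n₂ : ℕ → ℕ}
    (hn₁ : ∀ m, 0 < n₁ m) (hn₂ : ∀ m, 0 < n₂ m)
    (d₁ d₂ : ℕ → ℝ) (hd₁pos : ∀ m, 0 < d₁ m) (hd₂pos : ∀ m, 0 < d₂ m)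
    (hd₁ : Tendsto d₁ atTop atTop) (hd₂ : Tendsto d₂ atTop atTop)
    (B : ∀ m, Matrix (Fin (n₁ m)) (Fin (n₂ m)) ℕ)
    (hreg₁ : ∀ ε > (0 : ℝ), ∀ᶠ m in atTop,
      ∀ v, |(deg (bipAdj (B m)) (Sum.inl v) : ℝ) / d₁ m - 1| < ε)
    (hreg₂ : ∀ ε > (0 : ℝ), ∀ᶠ m in atTop,
      ∀ w, |(deg (bipAdj (B m)) (Sum.inr w) : ℝ) / d₂ m - 1| < ε) :
    (∀ ε > (0 : ℝ), ∀ᶠ m in atTop, ∀ i : ℕ, 1 ≤ i → i ≤ n₁ m + n₂ m →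
      |eigDesc ((bipAdj (B m)).map (Nat.cast : ℕ → ℝ)) i / Real.sqrt (d₁ m * d₂ m) -
          eigDesc (normAdj (bipAdj (B m))) i| < ε) ∧
    (Tendsto (fun m =>
        eigDesc ((bipAdj (B m)).map (Nat.cast : ℕ → ℝ)) 2 / Real.sqrt (d₁ m * d₂ m))
        atTop (nhds 0) →
      Tendsto (fun m => lam1 (bipAdj (B m))) atTop (nhds 1)) :=
  almost_regular_bipartite_spectral_general hn₁ hn₂ d₁ d₂ hd₁pos hd₂pos B hreg₁ hreg₂
end

section
/- Let m_2 = m_2(m_1) and p = p(m_1) ∈ (0,1) be functions of m_1 such that min{m_1, m_2}·p / log(max{m_1, m_2}) → ∞ as m_1 → ∞. Then for every ε > 0, the probability that every eigenvalue μ of the adjacency matrix of the random bipartite graph G(m_1, m_2, p) satisfies |μ| ≤ (1 + ε)·p·√(m_1 m_2) tends to 1 as m_1 → ∞. -/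
/-!
Each vertex degree is binomial, so by the Chernoff bound, with `c = (1 + ε) log (1 + ε) - ε > 0`,
all degrees in `V₁` are at most `(1 + ε) p m₂` and all degrees in `V₂` at most `(1 + ε) p m₁`,
except with probability at most `m₁ e^{-c p m₂} + m₂ e^{-c p m₁}`; the growth hypothesis makes
this `O(1 / m₁)`. On the good event, write the adjacency matrix as `A = [[0, B], [C, 0]]`. Then
`A² = diag(BC, CB)`, and in the `ℓ^∞` operator norm (the maximal absolute row sum)
`‖A²‖ ≤ ‖B‖ ‖C‖`, the product of the maximal degrees on the two sides. Every eigenvalue `μ` of `A`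
therefore satisfies `μ² ≤ (1 + ε)² p² m₁ m₂`.
-/

open Filter

def bern (p : ℝ) (b : Bool) : ℝ := if b then p else 1 - p

/-- Probability of the event `E` under the Erdős–Rényi random bipartite graph `G(m₁, m₂, p)`:
a sample point is the indicator function of the edge set, a subset of `Fin m₁ × Fin m₂`,
and each edge is present independently with probability `p`. -/
noncomputable def bipProb (m₁ m₂ : ℕ) (p : ℝ) (E : Set (Fin m₁ × Fin m₂ → Bool)) : ℝ :=
  haveI := Classical.dec
  ∑ ω : Fin m₁ × Fin m₂ → Bool,
    if ω ∈ E then ∏ e : Fin m₁ × Fin m₂, bern p (ω e) else 0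

def degL {m₁ m₂ : ℕ} (ω : Fin m₁ × Fin m₂ → Bool) (v : Fin m₁) : ℕ :=
  (Finset.univ.filter fun w => ω (v, w) = true).card

def degR {m₁ m₂ : ℕ} (ω : Fin m₁ × Fin m₂ → Bool) (w : Fin m₂) : ℕ :=
  (Finset.univ.filter fun v => ω (v, w) = true).card

def bipAdjR {m₁ m₂ : ℕ} (ω : Fin m₁ × Fin m₂ → Bool) :
    Matrix (Fin m₁ ⊕ Fin m₂) (Fin m₁ ⊕ Fin m₂) ℝ :=
  Matrix.fromBlocks 0 (Matrix.of fun v w => if ω (v, w) then (1 : ℝ) else 0)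
    (Matrix.of fun w v => if ω (v, w) then (1 : ℝ) else 0) 0

open Finset Real Topology

noncomputable def chernoffExponent (ε : ℝ) : ℝ := (1 + ε) * log (1 + ε) - ε

theorem chernoffExponent_pos {ε : ℝ} (hε : 0 < ε) : 0 < chernoffExponent ε := by
  have h1 : (0 : ℝ) < 1 + ε := by linarith
  have h := add_one_lt_exp (neg_ne_zero.mpr (log_pos (by linarith : 1 < 1 + ε)).ne')
  rw [exp_neg, exp_log h1] at h
  have key : chernoffExponent ε = (1 + ε) * ((1 + ε)⁻¹ - (-log (1 + ε) + 1)) := by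
    rw [chernoffExponent]
    field_simp
    ring
  rw [key]
  exact mul_pos h1 (sub_pos.mpr h)

section BernoulliProduct

variable {ι : Type*} [Fintype ι] {p : ℝ}

noncomputable def bernWeight (p : ℝ) (ω : ι → Bool) : ℝ := ∏ i, bern p (ω i)

theorem bern_nonneg (hp0 : 0 ≤ p) (hp1 : p ≤ 1) (b : Bool) : 0 ≤ bern p b := by
  cases b <;> simp [bern] <;> linarith

theorem bernWeight_nonneg (hp0 : 0 ≤ p) (hp1 : p ≤ 1) (ω : ι → Bool) : 0 ≤ bernWeight p ω :=
  prod_nonneg fun i _ => bern_nonneg hp0 hp1 (ω i)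

variable [DecidableEq ι]

noncomputable def bernProb (p : ℝ) (E : Set (ι → Bool)) : ℝ := ∑ ω, E.indicator (bernWeight p) ω

theorem sum_bernWeight_mul_prod (f : ι → Bool → ℝ) :
    ∑ ω, bernWeight p ω * ∏ i, f i (ω i) = ∏ i, ((1 - p) * f i false + p * f i true) := by
  simp_rw [bernWeight, ← prod_mul_distrib]
  rw [← Fintype.prod_sum fun i b => bern p b * f i b]
  simp [bern, add_comm]

theorem sum_bernWeight : ∑ ω : ι → Bool, bernWeight p ω = 1 := by
  simpa using sum_bernWeight_mul_prod (ι := ι) (p := p) fun _ _ => 1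

theorem bernProb_mono (hp0 : 0 ≤ p) (hp1 : p ≤ 1) {E F : Set (ι → Bool)} (hEF : E ⊆ F) :
    bernProb p E ≤ bernProb p F :=
  sum_le_sum fun ω _ => Set.indicator_le_indicator_of_subset hEF (bernWeight_nonneg hp0 hp1) ω

theorem bernProb_add_bernProb_compl (E : Set (ι → Bool)) :
    bernProb p E + bernProb p Eᶜ = 1 := by
  simp_rw [bernProb, ← sum_add_distrib, Set.indicator_self_add_compl_apply, sum_bernWeight]

theorem bernProb_le_one (hp0 : 0 ≤ p) (hp1 : p ≤ 1) (E : Set (ι → Bool)) : bernProb p E ≤ 1 := by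
  simpa [bernProb, sum_bernWeight] using bernProb_mono hp0 hp1 (Set.subset_univ E)

theorem bernProb_le_sum_of_subset_iUnion (hp0 : 0 ≤ p) (hp1 : p ≤ 1) {κ : Type*} [Fintype κ]
    {E : Set (ι → Bool)} (F : κ → Set (ι → Bool)) (hE : E ⊆ ⋃ k, F k) :
    bernProb p E ≤ ∑ k, bernProb p (F k) := by
  simp_rw [bernProb]
  rw [sum_comm]
  refine sum_le_sum fun ω _ => ?_
  have hF : ∀ k, 0 ≤ (F k).indicator (bernWeight p) ω :=
    fun k => Set.indicator_nonneg (fun ω _ => bernWeight_nonneg hp0 hp1 ω) ω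
  by_cases hω : ω ∈ E
  · obtain ⟨k, hk⟩ := Set.mem_iUnion.mp (hE hω)
    rw [Set.indicator_of_mem hω, ← Set.indicator_of_mem hk (bernWeight p)]
    exact single_le_sum (fun k _ => hF k) (mem_univ k)
  · rw [Set.indicator_of_notMem hω]
    exact sum_nonneg fun k _ => hF k

theorem bernProb_le_sum_mul (hp0 : 0 ≤ p) (hp1 : p ≤ 1) {E : Set (ι → Bool)}
    {g : (ι → Bool) → ℝ} (hg : ∀ ω, 0 ≤ g ω) (hgE : ∀ ω ∈ E, 1 ≤ g ω) :
    bernProb p E ≤ ∑ ω, bernWeight p ω * g ω := by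
  refine sum_le_sum fun ω _ => ?_
  by_cases hω : ω ∈ E
  · rw [Set.indicator_of_mem hω]
    exact le_mul_of_one_le_right (bernWeight_nonneg hp0 hp1 ω) (hgE ω hω)
  · rw [Set.indicator_of_notMem hω]
    exact mul_nonneg (bernWeight_nonneg hp0 hp1 ω) (hg ω)

theorem sum_bernWeight_mul_exp_card_filter (S : Finset ι) (t : ℝ) :
    ∑ ω, bernWeight p ω * exp (t * #{i ∈ S | ω i}) = (1 - p + p * exp t) ^ #S := by
  set f : ι → Bool → ℝ := fun i b => if i ∈ S ∧ b then exp t else 1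
  have hexp : ∀ ω : ι → Bool, exp (t * #{i ∈ S | ω i}) = ∏ i, f i (ω i) := by
    intro ω
    rw [prod_ite, prod_const_one, mul_one, prod_const, ← exp_nat_mul, mul_comm]
    congr 4
    ext i
    simp
  have hf : ∀ i, (1 - p) * f i false + p * f i true = if i ∈ S then 1 - p + p * exp t else 1 := by
    intro i
    by_cases hi : i ∈ S <;> simp [f, hi]
  rw [sum_congr rfl fun ω _ => congrArg _ (hexp ω), sum_bernWeight_mul_prod]
  simp_rw [hf, prod_ite_mem, univ_inter, prod_const]

theorem bernProb_card_filter_gt_le (hp0 : 0 ≤ p) (hp1 : p ≤ 1) (S : Finset ι) {ε : ℝ}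
    (hε : 0 < ε) :
    bernProb p {ω | (1 + ε) * (p * #S) < #{i ∈ S | ω i}} ≤
      exp (-(chernoffExponent ε * (p * #S))) := by
  -- exponential Markov inequality at the optimal parameter `t = log (1 + ε)`
  set t := log (1 + ε)
  have het : exp t = 1 + ε := exp_log (by linarith)
  have ht : 0 < t := log_pos (by linarith)
  have hmarkov := bernProb_le_sum_mul hp0 hp1
    (g := fun ω => exp (t * (#{i ∈ S | ω i} - (1 + ε) * (p * #S)))) (fun ω => (exp_pos _).le)
    (fun ω hω => one_le_exp (mul_nonneg ht.le (sub_nonneg.mpr (le_of_lt hω))))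
  have hmgf : 1 - p + p * exp t ≤ exp (p * (exp t - 1)) := by
    linarith [add_one_le_exp (p * (exp t - 1))]
  calc _ ≤ ∑ ω, bernWeight p ω * exp (t * (#{i ∈ S | ω i} - (1 + ε) * (p * #S))) := hmarkov
    _ = exp (-(t * ((1 + ε) * (p * #S)))) * (1 - p + p * exp t) ^ #S := by
      rw [← sum_bernWeight_mul_exp_card_filter, mul_sum]
      refine sum_congr rfl fun ω _ => ?_
      rw [mul_sub, exp_sub, exp_neg]
      ring
    _ ≤ exp (-(t * ((1 + ε) * (p * #S)))) * exp (p * (exp t - 1)) ^ #S := by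
      gcongr
    _ = exp (-(chernoffExponent ε * (p * #S))) := by
      have hc : chernoffExponent ε = (1 + ε) * t - ε := rfl
      rw [← exp_nat_mul, ← exp_add, het, hc]
      congr 1
      ring

end BernoulliProduct

section LinftyOpNorm

attribute [local instance] Matrix.linftyOpSeminormedAddCommGroup Matrix.linftyOpNormedRing
  Matrix.linftyOpNormedAlgebra

namespace Matrix

variable {l m n o : Type*} [Fintype l] [Fintype m] [Fintype n] [Fintype o]

theorem linfty_opNorm_le_of_forall_sum_le {α : Type*} [SeminormedAddCommGroup α]
    (A : Matrix m n α) {D : ℝ} (hD : 0 ≤ D) (h : ∀ i, ∑ j, ‖A i j‖ ≤ D) : ‖A‖ ≤ D := by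
  lift D to NNReal using hD
  rw [linfty_opNorm_def, NNReal.coe_le_coe]
  exact Finset.sup_le fun i _ => by rw [← NNReal.coe_le_coe, NNReal.coe_sum]; exact h i

theorem linfty_opNNNorm_fromBlocks_zero {α : Type*} [SeminormedAddCommGroup α]
    (A : Matrix l m α) (D : Matrix n o α) : ‖fromBlocks A 0 0 D‖₊ = max ‖A‖₊ ‖D‖₊ := by
  simp [linfty_opNNNorm_def, ← Finset.univ_disjSum_univ, Finset.sup_disjSum]

theorem linfty_opNorm_one_le {α : Type*} [NormedRing α] [NormOneClass α] [DecidableEq n] :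
    ‖(1 : Matrix n n α)‖ ≤ 1 := by
  rw [← diagonal_one, linfty_opNorm_diagonal]
  exact pi_norm_le_iff_of_nonneg zero_le_one |>.mpr fun _ => by simp

theorem norm_le_linfty_opNorm_of_mem_spectrum {𝕜 : Type*} [RCLike 𝕜] [DecidableEq n]
    (A : Matrix n n 𝕜) {μ : 𝕜} (hμ : μ ∈ spectrum 𝕜 A) : ‖μ‖ ≤ ‖A‖ :=
  (spectrum.norm_le_norm_mul_of_mem hμ).trans
    (mul_le_of_le_one_right (norm_nonneg _) linfty_opNorm_one_le)

theorem sq_norm_le_of_mem_spectrum_fromBlocks {𝕜 : Type*} [RCLike 𝕜] [DecidableEq m]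
    [DecidableEq n] (B : Matrix m n 𝕜) (C : Matrix n m 𝕜) {μ : 𝕜}
    (hμ : μ ∈ spectrum 𝕜 (fromBlocks 0 B C 0)) : ‖μ‖ ^ 2 ≤ ‖B‖ * ‖C‖ := by
  have hsq : (fromBlocks 0 B C 0) ^ 2 = fromBlocks (B * C) 0 0 (C * B) := by
    simp [sq, fromBlocks_multiply]
  calc ‖μ‖ ^ 2 = ‖μ ^ 2‖ := (norm_pow μ 2).symm
    _ ≤ ‖fromBlocks (B * C) 0 0 (C * B)‖ :=
      hsq ▸ norm_le_linfty_opNorm_of_mem_spectrum _ (spectrum.pow_mem_pow _ 2 hμ)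
    _ ≤ ‖B‖ * ‖C‖ := by
      rw [← coe_nnnorm, linfty_opNNNorm_fromBlocks_zero, NNReal.coe_max]
      exact max_le (linfty_opNorm_mul B C) ((linfty_opNorm_mul C B).trans_eq (mul_comm _ _))

end Matrix

theorem sum_norm_ite_one_zero {κ : Type*} [Fintype κ] (b : κ → Bool) :
    ∑ k, ‖if b k then (1 : ℝ) else 0‖ = #{k | b k} := by
  rw [card_filter]
  push_cast
  refine sum_congr rfl fun k _ => ?_
  split <;> simp

theorem sq_le_of_mem_spectrum_bipAdjR {m₁ m₂ : ℕ} (ω : Fin m₁ × Fin m₂ → Bool) {D₁ D₂ : ℝ}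
    (hD₁ : 0 ≤ D₁) (hD₂ : 0 ≤ D₂) (hL : ∀ v, (degL ω v : ℝ) ≤ D₁) (hR : ∀ w, (degR ω w : ℝ) ≤ D₂)
    {μ : ℝ} (hμ : μ ∈ spectrum ℝ (bipAdjR ω)) : μ ^ 2 ≤ D₁ * D₂ := by
  have hB := Matrix.linfty_opNorm_le_of_forall_sum_le
    (Matrix.of fun v w => if ω (v, w) then (1 : ℝ) else 0) hD₁ fun v =>
      (sum_norm_ite_one_zero _).trans_le (hL v)
  have hC := Matrix.linfty_opNorm_le_of_forall_sum_le
    (Matrix.of fun w v => if ω (v, w) then (1 : ℝ) else 0) hD₂ fun w =>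
      (sum_norm_ite_one_zero _).trans_le (hR w)
  rw [← sq_abs, ← Real.norm_eq_abs]
  exact (Matrix.sq_norm_le_of_mem_spectrum_fromBlocks _ _ hμ).trans
    (mul_le_mul hB hC (norm_nonneg _) hD₁)

end LinftyOpNorm

section BipartiteGraph

variable {m₁ m₂ : ℕ}

theorem bipProb_eq_bernProb (p : ℝ) (E : Set (Fin m₁ × Fin m₂ → Bool)) :
    bipProb m₁ m₂ p E = bernProb p E := by
  -- the two sums differ only in their decidability instances
  simp only [bipProb, bernProb]
  congr!

theorem degL_eq_card_filter (ω : Fin m₁ × Fin m₂ → Bool) (v : Fin m₁) :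
    degL ω v = #{e ∈ univ.map (Function.Embedding.sectR v (Fin m₂)) | ω e} := by
  rw [filter_map, card_map]
  rfl

theorem degR_eq_card_filter (ω : Fin m₁ × Fin m₂ → Bool) (w : Fin m₂) :
    degR ω w = #{e ∈ univ.map (Function.Embedding.sectL (Fin m₁) w) | ω e} := by
  rw [filter_map, card_map]
  rfl

variable {p ε : ℝ}

theorem bernProb_degL_gt_le (hp0 : 0 ≤ p) (hp1 : p ≤ 1) (hε : 0 < ε) (v : Fin m₁) :
    bernProb p {ω : Fin m₁ × Fin m₂ → Bool | (1 + ε) * (p * m₂) < degL ω v} ≤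
      exp (-(chernoffExponent ε * (p * m₂))) := by
  simpa [degL_eq_card_filter] using
    bernProb_card_filter_gt_le hp0 hp1 (univ.map (Function.Embedding.sectR v (Fin m₂))) hε

theorem bernProb_degR_gt_le (hp0 : 0 ≤ p) (hp1 : p ≤ 1) (hε : 0 < ε) (w : Fin m₂) :
    bernProb p {ω : Fin m₁ × Fin m₂ → Bool | (1 + ε) * (p * m₁) < degR ω w} ≤
      exp (-(chernoffExponent ε * (p * m₁))) := by
  simpa [degR_eq_card_filter] using
    bernProb_card_filter_gt_le hp0 hp1 (univ.map (Function.Embedding.sectL (Fin m₁) w)) hε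

theorem one_sub_le_bipProb_abs_le_of_mem_spectrum (hp0 : 0 ≤ p) (hp1 : p ≤ 1) (hε : 0 < ε) :
    1 - (m₁ * exp (-(chernoffExponent ε * (p * m₂))) +
        m₂ * exp (-(chernoffExponent ε * (p * m₁)))) ≤
      bipProb m₁ m₂ p {ω | ∀ μ ∈ spectrum ℝ (bipAdjR ω), |μ| ≤ (1 + ε) * p * √(m₁ * m₂)} := by
  set good := {ω : Fin m₁ × Fin m₂ → Bool |
    (∀ v, (degL ω v : ℝ) ≤ (1 + ε) * (p * m₂)) ∧ ∀ w, (degR ω w : ℝ) ≤ (1 + ε) * (p * m₁)}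
  have hgood : good ⊆ {ω | ∀ μ ∈ spectrum ℝ (bipAdjR ω), |μ| ≤ (1 + ε) * p * √(m₁ * m₂)} := by
    rintro ω ⟨hL, hR⟩ μ hμ
    refine abs_le_of_sq_le_sq ?_ (by positivity)
    calc μ ^ 2 ≤ (1 + ε) * (p * m₂) * ((1 + ε) * (p * m₁)) :=
          sq_le_of_mem_spectrum_bipAdjR ω (by positivity) (by positivity) hL hR hμ
      _ = ((1 + ε) * p * √(m₁ * m₂)) ^ 2 := by
          rw [mul_pow, sq_sqrt (by positivity)]
          ring
  have hbad : goodᶜ ⊆ ⋃ k, Sum.elim (fun v => {ω | (1 + ε) * (p * m₂) < degL ω v})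
      (fun w => {ω | (1 + ε) * (p * m₁) < degR ω w}) k := by
    intro ω hω
    simp only [good, Set.mem_compl_iff, Set.mem_ofPred_eq, not_and_or, not_forall, not_le] at hω
    rcases hω with ⟨v, hv⟩ | ⟨w, hw⟩
    exacts [Set.mem_iUnion.mpr ⟨.inl v, hv⟩, Set.mem_iUnion.mpr ⟨.inr w, hw⟩]
  have hbad_le : bernProb p goodᶜ ≤ m₁ * exp (-(chernoffExponent ε * (p * m₂))) +
      m₂ * exp (-(chernoffExponent ε * (p * m₁))) := by
    refine (bernProb_le_sum_of_subset_iUnion hp0 hp1 _ hbad).trans ?_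
    rw [Fintype.sum_sum_type]
    gcongr
    · simpa using sum_le_sum fun v (_ : v ∈ univ) => bernProb_degL_gt_le (m₂ := m₂) hp0 hp1 hε v
    · simpa using sum_le_sum fun w (_ : w ∈ univ) => bernProb_degR_gt_le (m₁ := m₁) hp0 hp1 hε w
  rw [bipProb_eq_bernProb]
  linarith [bernProb_add_bernProb_compl (p := p) good, bernProb_mono hp0 hp1 hgood]

end BipartiteGraph

theorem natCast_mul_exp_neg_le_inv {k M : ℕ} (hkM : k ≤ M) {x : ℝ} (hx : 2 * log M ≤ x) :
    k * exp (-x) ≤ (M : ℝ)⁻¹ := by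
  rcases M.eq_zero_or_pos with rfl | hM
  · simp [Nat.le_zero.mp hkM]
  have hM' : (0 : ℝ) < M := by exact_mod_cast hM
  calc (k : ℝ) * exp (-x) ≤ M * exp (-(2 * log M)) := by gcongr
    _ = (M : ℝ)⁻¹ := by
      rw [exp_neg, show (2 : ℝ) * log M = ((2 : ℕ) : ℝ) * log M by norm_num, exp_nat_mul,
        exp_log hM']
      field_simp

theorem tendsto_natCast_mul_exp_add_natCast_mul_exp (m₂ : ℕ → ℕ) (p : ℕ → ℝ) (hp : ∀ m, 0 ≤ p m)
    (hgrow : Tendsto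
      (fun m₁ => ((min m₁ (m₂ m₁) : ℕ) : ℝ) * p m₁ / log ((max m₁ (m₂ m₁) : ℕ) : ℝ))
      atTop atTop) {c : ℝ} (hc : 0 < c) :
    Tendsto (fun m₁ : ℕ => m₁ * exp (-(c * (p m₁ * m₂ m₁))) + m₂ m₁ * exp (-(c * (p m₁ * m₁))))
      atTop (𝓝 0) := by
  have hlarge : ∀ᶠ m₁ in atTop, 2 * log ((max m₁ (m₂ m₁) : ℕ) : ℝ) ≤
      c * (p m₁ * ((min m₁ (m₂ m₁) : ℕ) : ℝ)) := by
    filter_upwards [hgrow.eventually_ge_atTop (2 / c)] with m₁ h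
    rcases le_or_gt (log ((max m₁ (m₂ m₁) : ℕ) : ℝ)) 0 with hlog | hlog
    · have := hp m₁
      exact (by linarith : 2 * log _ ≤ 0).trans (by positivity)
    · rw [le_div_iff₀ hlog, div_mul_eq_mul_div, div_le_iff₀ hc] at h
      linarith
  -- on that event each of the two terms is at most `1 / max m₁ m₂ ≤ 1 / m₁`
  refine squeeze_zero' (Eventually.of_forall fun m₁ => by have := hp m₁; positivity) ?_
    (tendsto_const_div_atTop_nhds_zero_nat 2)
  filter_upwards [hlarge, eventually_gt_atTop 0] with m₁ h hm₁
  have hmax : ((max m₁ (m₂ m₁) : ℕ) : ℝ)⁻¹ ≤ (m₁ : ℝ)⁻¹ :=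
    inv_anti₀ (by exact_mod_cast hm₁) (by exact_mod_cast le_max_left _ _)
  have hmin₁ : c * (p m₁ * ((min m₁ (m₂ m₁) : ℕ) : ℝ)) ≤ c * (p m₁ * m₂ m₁) := by
    have := hp m₁; gcongr; exact_mod_cast min_le_right _ _
  have hmin₂ : c * (p m₁ * ((min m₁ (m₂ m₁) : ℕ) : ℝ)) ≤ c * (p m₁ * m₁) := by
    have := hp m₁; gcongr; exact_mod_cast min_le_left _ _
  have h₁ := natCast_mul_exp_neg_le_inv (le_max_left m₁ (m₂ m₁)) (h.trans hmin₁)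
  have h₂ := natCast_mul_exp_neg_le_inv (le_max_right m₁ (m₂ m₁)) (h.trans hmin₂)
  rw [div_eq_mul_inv]
  linarith

/-- If `min{m₁,m₂}·p/log(max{m₁,m₂}) → ∞`, then a.a.s. every eigenvalue `μ`
of the adjacency matrix of `G(m₁, m₂, p)` satisfies `|μ| ≤ (1+ε)·p·√(m₁m₂)`. -/
theorem bipartite_adjacency_eigenvalue_bound (m₂ : ℕ → ℕ) (p : ℕ → ℝ)
    (hp : ∀ m, 0 < p m ∧ p m < 1)
    (hgrow : Tendsto
      (fun m₁ => ((min m₁ (m₂ m₁) : ℕ) : ℝ) * p m₁ / Real.log ((max m₁ (m₂ m₁) : ℕ) : ℝ))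
      atTop atTop)
    (ε : ℝ) (hε : 0 < ε) :
    Tendsto (fun m₁ => bipProb m₁ (m₂ m₁) (p m₁)
      {ω | ∀ μ ∈ spectrum ℝ (bipAdjR ω),
        |μ| ≤ (1 + ε) * p m₁ * Real.sqrt ((m₁ : ℝ) * (m₂ m₁ : ℝ))})
      atTop (nhds 1) := by
  have hfail := tendsto_natCast_mul_exp_add_natCast_mul_exp m₂ p (fun m => (hp m).1.le) hgrow
    (chernoffExponent_pos hε)
  refine tendsto_of_tendsto_of_tendsto_of_le_of_le (by simpa using hfail.const_sub 1)
    tendsto_const_nhds (fun m₁ => ?_) (fun m₁ => ?_)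
  · exact one_sub_le_bipProb_abs_le_of_mem_spectrum (hp m₁).1.le (hp m₁).2.le hε
  · rw [bipProb_eq_bernProb]
    exact bernProb_le_one (hp m₁).1.le (hp m₁).2.le _
end

section
/- Let G be a bipartite graph with parts V_1 and V_2 of sizes m_1 and m_2, with m_1 ≤ m_2. Let 0 ≤ δ ≤ 1 and p ≥ 0 be real numbers, and set d_1 = (1−δ)m_2 p and d_2 = (1−δ)m_1 p. Suppose that for all subsets A ⊆ V_1 and B ⊆ V_2 with m_2·|A| + m_1·|B| > m_1·m_2 we have e_G(A,B) ≥ (1−δ)·|A|·|B|·p. Then for all subsets A ⊆ V_1 and B ⊆ V_2: d_1·|A| ≤ e_G(A,B) + d_2·(m_2 − |B|). -/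
/-!
Write `c = (1 - δ) p`, `a = |A|`, `b = |B|`. If `m₂ a + m₁ b ≤ m₁ m₂`, then already
`c m₂ a ≤ c m₁ (m₂ - b)`. Otherwise the density hypothesis gives `c a b ≤ e_G(A,B)`, and
`m₂ a ≤ a b + m₁ (m₂ - b)` because the difference is `(m₁ - a)(m₂ - b) ≥ 0`.
-/

lemma mul_le_mul_add_mul_sub {a b m₁ m₂ : ℝ} (ha : a ≤ m₁) (hb : b ≤ m₂) :
    m₂ * a ≤ a * b + m₁ * (m₂ - b) := by
  nlinarith [mul_nonneg (sub_nonneg.2 ha) (sub_nonneg.2 hb)]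

lemma mul_le_add_mul_sub_of_dense {c e a b m₁ m₂ : ℝ} (hc : 0 ≤ c) (he : 0 ≤ e)
    (ha : a ≤ m₁) (hb : b ≤ m₂) (hdense : m₂ * a + m₁ * b > m₁ * m₂ → c * a * b ≤ e) :
    c * m₂ * a ≤ e + c * m₁ * (m₂ - b) := by
  by_cases h : m₂ * a + m₁ * b > m₁ * m₂
  · calc c * m₂ * a ≤ c * (a * b + m₁ * (m₂ - b)) := by
          rw [mul_assoc]; exact mul_le_mul_of_nonneg_left (mul_le_mul_add_mul_sub ha hb) hc
      _ = c * a * b + c * m₁ * (m₂ - b) := by ring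
      _ ≤ e + c * m₁ * (m₂ - b) := by linarith [hdense h]
  · have hsparse : m₂ * a ≤ m₁ * (m₂ - b) := by linarith
    calc c * m₂ * a ≤ c * (m₁ * (m₂ - b)) := by
          rw [mul_assoc]; exact mul_le_mul_of_nonneg_left hsparse hc
      _ ≤ e + c * m₁ * (m₂ - b) := by linarith [mul_assoc c m₁ (m₂ - b)]

theorem ore_ryser_hypothesis_general {V₁ V₂ : Type*} [Fintype V₁] [Fintype V₂]
    [DecidableEq V₁] [DecidableEq V₂]
    (E : Finset (V₁ × V₂))
    (δ p : ℝ) (hδ1 : δ ≤ 1) (hp : 0 ≤ p)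
    (hyp : ∀ (A : Finset V₁) (B : Finset V₂),
      (Fintype.card V₂ : ℝ) * A.card + (Fintype.card V₁ : ℝ) * B.card >
        (Fintype.card V₁ : ℝ) * (Fintype.card V₂ : ℝ) →
      (1 - δ) * A.card * B.card * p ≤ ((E.filter fun e => e.1 ∈ A ∧ e.2 ∈ B).card : ℝ)) :
    ∀ (A : Finset V₁) (B : Finset V₂),
      (1 - δ) * (Fintype.card V₂ : ℝ) * p * A.card ≤
        ((E.filter fun e => e.1 ∈ A ∧ e.2 ∈ B).card : ℝ) +
          (1 - δ) * (Fintype.card V₁ : ℝ) * p * ((Fintype.card V₂ : ℝ) - B.card) := by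
  intro A B
  have key := mul_le_add_mul_sub_of_dense (c := (1 - δ) * p)
    (mul_nonneg (sub_nonneg.2 hδ1) hp) (Nat.cast_nonneg _)
    (by exact_mod_cast A.card_le_univ) (by exact_mod_cast B.card_le_univ)
    (fun h => (hyp A B h).trans_eq' (by ring))
  convert key using 2 <;> ring

/-- Let `G` be a bipartite graph with parts `V₁, V₂` of sizes `m₁ ≤ m₂`,
`0 ≤ δ ≤ 1`, `p ≥ 0`, `d₁ = (1-δ)m₂p`, `d₂ = (1-δ)m₁p`. If for all `A ⊆ V₁`, `B ⊆ V₂` with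
`m₂|A| + m₁|B| > m₁m₂` we have `e_G(A,B) ≥ (1-δ)|A||B|p`, then for all `A ⊆ V₁`, `B ⊆ V₂`,
`d₁|A| ≤ e_G(A,B) + d₂(m₂ - |B|)`. -/
theorem ore_ryser_hypothesis {V₁ V₂ : Type*} [Fintype V₁] [Fintype V₂]
    [DecidableEq V₁] [DecidableEq V₂]
    (E : Finset (V₁ × V₂)) (hcard : Fintype.card V₁ ≤ Fintype.card V₂)
    (δ p : ℝ) (hδ0 : 0 ≤ δ) (hδ1 : δ ≤ 1) (hp : 0 ≤ p)
    (hyp : ∀ (A : Finset V₁) (B : Finset V₂),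
      (Fintype.card V₂ : ℝ) * A.card + (Fintype.card V₁ : ℝ) * B.card >
        (Fintype.card V₁ : ℝ) * (Fintype.card V₂ : ℝ) →
      (1 - δ) * A.card * B.card * p ≤ ((E.filter fun e => e.1 ∈ A ∧ e.2 ∈ B).card : ℝ)) :
    ∀ (A : Finset V₁) (B : Finset V₂),
      (1 - δ) * (Fintype.card V₂ : ℝ) * p * A.card ≤
        ((E.filter fun e => e.1 ∈ A ∧ e.2 ∈ B).card : ℝ) +
          (1 - δ) * (Fintype.card V₁ : ℝ) * p * ((Fintype.card V₂ : ℝ) - B.card) :=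
  ore_ryser_hypothesis_general E δ p hδ1 hp hyp
end

section
/- Let n ≥ 1 and l ≥ 1, and let F_n be the free group on n generators. Then the subgroup of F_n generated by the set of all elements whose reduced word length is exactly l has finite index in F_n; moreover, its index is at most the number of elements of F_n of reduced word length at most l − 1. -/
/-
Peeling off the last `l` letters of a reduced word leaves a word of length at most `|g| - l`, and the
peeled-off suffix, being reduced, has length exactly `l`. Iterating, every `g` lies in a coset
`r H` of `H = ⟨ g | |g| = l ⟩` with `|r| < l`, so the finitely many elements of length `< l`
meet every left coset of `H`.
-/

theorem Subgroup.finiteIndex_and_index_le_card_of_forall_inv_mul_mem {G : Type*} [Group G]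
    (H : Subgroup G) {S : Set G} (hS : S.Finite) (hcover : ∀ g, ∃ s ∈ S, s⁻¹ * g ∈ H) :
    H.FiniteIndex ∧ H.index ≤ Nat.card S := by
  have : Finite S := hS
  have hsurj : Function.Surjective fun s : S ↦ (s : G ⧸ H) := by
    refine fun q ↦ QuotientGroup.induction_on q fun g ↦ ?_
    obtain ⟨s, hs, hsg⟩ := hcover g
    exact ⟨⟨s, hs⟩, QuotientGroup.eq.2 hsg⟩
  have : Finite (G ⧸ H) := Finite.of_surjective _ hsurj
  exact ⟨finiteIndex_of_finite_quotient, Nat.card_le_card_of_surjective _ hsurj⟩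

namespace FreeGroup

variable {α : Type*} [DecidableEq α]

theorem finite_setOf_norm_le [Finite α] (m : ℕ) : {g : FreeGroup α | g.norm ≤ m}.Finite :=
  (List.finite_length_le _ m).preimage toWord_injective.injOn

theorem exists_eq_mul_norm_eq {l : ℕ} (g : FreeGroup α) (hl : l ≤ g.norm) :
    ∃ p s : FreeGroup α, g = p * s ∧ p.norm ≤ g.norm - l ∧ s.norm = l := by
  set k := g.norm - l
  refine ⟨mk (g.toWord.take k), mk (g.toWord.drop k), ?_, ?_, ?_⟩
  · rw [mul_mk, List.take_append_drop, mk_toWord]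
  · exact norm_mk_le.trans (List.length_take_le _ _)
  · have hred : IsReduced (g.toWord.drop k) :=
      isReduced_toWord.infix (List.drop_suffix _ _).isInfix
    rw [norm, toWord_mk, hred.reduce_eq, List.length_drop]
    exact Nat.sub_sub_self hl

theorem exists_norm_lt_inv_mul_mem_closure {l : ℕ} (hl : 0 < l) (g : FreeGroup α) :
    ∃ r : FreeGroup α, r.norm < l ∧ r⁻¹ * g ∈ Subgroup.closure {h | h.norm = l} := by
  induction hg : g.norm using Nat.strong_induction_on generalizing g with
  | _ m ih =>
    by_cases hsmall : g.norm < l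
    · exact ⟨g, hsmall, by simp⟩
    obtain ⟨p, s, rfl, hp, hs⟩ := exists_eq_mul_norm_eq g (not_lt.1 hsmall)
    obtain ⟨r, hr, hrp⟩ := ih p.norm (by omega) p rfl
    refine ⟨r, hr, ?_⟩
    rw [← mul_assoc]
    exact mul_mem hrp (Subgroup.subset_closure hs)

end FreeGroup

theorem finiteIndex_closure_sphere_general (n l : ℕ) (hl : 1 ≤ l) :
    (Subgroup.closure {g : FreeGroup (Fin n) | g.toWord.length = l}).FiniteIndex ∧
    (Subgroup.closure {g : FreeGroup (Fin n) | g.toWord.length = l}).index ≤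
      Nat.card {g : FreeGroup (Fin n) // g.toWord.length ≤ l - 1} := by
  refine Subgroup.finiteIndex_and_index_le_card_of_forall_inv_mul_mem _
    (FreeGroup.finite_setOf_norm_le (l - 1)) fun g ↦ ?_
  obtain ⟨r, hr, hrg⟩ := FreeGroup.exists_norm_lt_inv_mul_mem_closure hl g
  exact ⟨r, Nat.le_sub_one_of_lt hr, hrg⟩

/-- In the free group on `n` generators, the subgroup generated by the set
of all elements of reduced word length exactly `l` has finite index, and its index is at most
the number of elements of reduced word length at most `l - 1`. -/
theorem finiteIndex_closure_sphere (n l : ℕ) (hn : 1 ≤ n) (hl : 1 ≤ l) :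
    (Subgroup.closure {g : FreeGroup (Fin n) | g.toWord.length = l}).FiniteIndex ∧
    (Subgroup.closure {g : FreeGroup (Fin n) | g.toWord.length = l}).index ≤
      Nat.card {g : FreeGroup (Fin n) // g.toWord.length ≤ l - 1} :=
  finiteIndex_closure_sphere_general n l hl
end
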